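/- Replacing an element r·s (with r, s ≥ 2) at position p of a mixed radix base by the two elements r, s does not increase the sum of digits of any natural number v. -/

import Mathlib

/-- The weight of digit position `i` in mixed radix base `B`: product of the first `i` radices. -/
def weight (B : List ℕ) (i : ℕ) : ℕ := (B.take i).prod

/-- The `i`-th digit of `v` in mixed radix base `B` (the most significant digit, at
position `B.length`, is `v / B.prod` and is unbounded). -/
def digit (B : List ℕ) (v i : ℕ) : ℕ :=
  if i < B.length then (v / weight B i) % B.getD i 1 else v / B.prod

/-- The sum of the digits of `v` in base `B`. -/
def digitSum (B : List ℕ) (v : ℕ) : ℕ :=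
  ∑ i ∈ Finset.range (B.length + 1), digit B v i

/-- The sum of digits of all elements of the multiset `S` in base `B`. -/
def sumDigits (S : Multiset ℕ) (B : List ℕ) : ℕ :=
  (S.map (digitSum B)).sum

/-! Both bases share the prefix `P`, which reads the same digits of `v` and passes `u = v / P.prod`
on. From there `r :: s` produces the digits `u % r` and `u / r % s`, while `r * s` produces
`u % (r * s) = u % r + r * (u / r % s)`, and both hand `u / (r * s)` to `Q`. -/

theorem Nat.mod_add_div_mod_le_mod_mul {a : ℕ} (ha : 0 < a) (b u : ℕ) :
    u % a + u / a % b ≤ u % (a * b) := by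
  rw [Nat.mod_mul]
  exact Nat.add_le_add_left (Nat.le_mul_of_pos_left _ ha) _

lemma digit_append_of_lt (P L : List ℕ) (v : ℕ) {i : ℕ} (h : i < P.length) :
    digit (P ++ L) v i = digit P v i := by
  have hw : weight (P ++ L) i = weight P i := by
    simp [weight, List.take_append, Nat.sub_eq_zero_of_le h.le]
  rw [digit, digit, if_pos (by simp; omega), if_pos h, hw, List.getD_append _ _ _ _ h]

lemma digit_append_length_add (P L : List ℕ) (v j : ℕ) :
    digit (P ++ L) v (P.length + j) = digit L (v / P.prod) j := by
  have hw : weight (P ++ L) (P.length + j) = P.prod * weight L j := by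
    simp [weight, List.take_append, List.take_of_length_le (by omega : P.length ≤ P.length + j)]
  have hg : (P ++ L).getD (P.length + j) 1 = L.getD j 1 := by
    rw [List.getD_append_right _ _ _ _ (by omega)]
    simp
  simp only [digit, List.length_append, List.prod_append, hw, hg, Nat.div_div_eq_div_mul]
  split_ifs <;> omega

lemma digitSum_append (P L : List ℕ) (v : ℕ) :
    digitSum (P ++ L) v =
      ∑ i ∈ Finset.range P.length, digit P v i + digitSum L (v / P.prod) := by
  rw [digitSum, List.length_append, add_assoc, Finset.sum_range_add]
  congr 1
  · exact Finset.sum_congr rfl fun i hi => digit_append_of_lt P L v (Finset.mem_range.mp hi)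
  · exact Finset.sum_congr rfl fun j _ => digit_append_length_add P L v j

lemma digitSum_cons (a : ℕ) (L : List ℕ) (v : ℕ) :
    digitSum (a :: L) v = v % a + digitSum L (v / a) := by
  simpa [weight, digit] using digitSum_append [a] L v

lemma digitSum_cons_cons_le_mul_cons {r : ℕ} (hr : 0 < r) (s : ℕ) (Q : List ℕ) (u : ℕ) :
    digitSum (r :: s :: Q) u ≤ digitSum (r * s :: Q) u := by
  rw [digitSum_cons, digitSum_cons, digitSum_cons, Nat.div_div_eq_div_mul, ← add_assoc]
  exact Nat.add_le_add_right (Nat.mod_add_div_mod_le_mod_mul hr s u) _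

theorem stmt8_general (P Q : List ℕ) (r s : ℕ) (hr : 2 ≤ r) (v : ℕ) :
    digitSum (P ++ r :: s :: Q) v ≤ digitSum (P ++ (r * s) :: Q) v := by
  rw [digitSum_append, digitSum_append]
  exact Nat.add_le_add_left (digitSum_cons_cons_le_mul_cons (by omega) s Q _) _

theorem stmt8 (P Q : List ℕ) (r s : ℕ) (hr : 2 ≤ r) (hs : 2 ≤ s)
    (hP : ∀ x ∈ P, 2 ≤ x) (hQ : ∀ x ∈ Q, 2 ≤ x) (v : ℕ) :
    digitSum (P ++ r :: s :: Q) v ≤ digitSum (P ++ (r * s) :: Q) v :=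
  stmt8_general P Q r s hr v
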